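/- arXiv:2412.06402 — 3 statements merged into one kernel-verified Lean document; each statement's English description precedes it below -/
import Mathlib

section
/- For all n ≥ 2, the VC-dimension of the family of total orders on [n] over the partial orders on [n] (via compatibility) is at least 3(⌊n/2⌋ − 1). -/
/-- A digraph (relation) is acyclic iff its transitive closure is irreflexive. -/
def IsAcyclicRel {α : Type*} (r : α → α → Prop) : Prop :=
  Irreflexive (Relation.TransGen r)

/-- Two orders are compatible iff the union of their relations is acyclic. -/
def OrdCompat {α : Type*} (r s : α → α → Prop) : Prop :=
  IsAcyclicRel (fun a b => r a b ∨ s a b)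

/-- The set of (strict) partial orders on `[n] = Fin n`. -/
def PartialOrds (n : ℕ) : Set (Fin n → Fin n → Prop) :=
  {r | Irreflexive r ∧ Transitive r}

/-- The set of (strict) total orders on `[n] = Fin n`. -/
def TotalOrds (n : ℕ) : Set (Fin n → Fin n → Prop) :=
  {r | Irreflexive r ∧ Transitive r ∧ ∀ a b : Fin n, a ≠ b → r a b ∨ r b a}

/-- `S ⊆ Y` is shattered by the family `F ⊆ X` via the relation `rel`:
every subset of `S` is cut out by some `B ∈ F`. -/
def ShattersVia {X Y : Type*} (F : Set X) (rel : X → Y → Prop) (S : Set Y) : Prop :=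
  ∀ A ⊆ S, ∃ B ∈ F, {y ∈ S | rel B y} = A

/-!
Fix the anchors `0` and `1`, and for every pair `{2i, 2i + 1}` with `1 ≤ i < n / 2` take the three
partial orders `2i ≺ 2i + 1`, `0 ≺ {2i, 2i + 1}` and `{2i, 2i + 1} ≺ 1`. A total order is compatible
with a partial order iff it extends it, so prescribing which of these `3 (n / 2 - 1)` orders are
compatible amounts to placing, independently for each pair, its two elements relative to each other
and to the anchors `0 < 1`; each of the eight patterns is realised by a suitable placement.
-/

section Shattering

variable {X Y ι : Type*} {F : Set X} {rel : X → Y → Prop} {f : ι → Y} {s : Set ι}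

theorem injOn_of_forall_realize (h : ∀ A ⊆ s, ∃ B ∈ F, ∀ i ∈ s, rel B (f i) ↔ i ∈ A) :
    Set.InjOn f s := by
  intro i hi j hj hij
  obtain ⟨B, -, hB⟩ := h {i} (Set.singleton_subset_iff.mpr hi)
  have hBi : rel B (f i) := (hB i hi).2 rfl
  exact ((hB j hj).1 (hij ▸ hBi)).symm

theorem shattersVia_image_of_forall_realize
    (h : ∀ A ⊆ s, ∃ B ∈ F, ∀ i ∈ s, rel B (f i) ↔ i ∈ A) :
    ShattersVia F rel (f '' s) := by
  intro A hA
  obtain ⟨B, hBF, hB⟩ := h (s ∩ f ⁻¹' A) Set.inter_subset_left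
  refine ⟨B, hBF, Set.ext fun y => ⟨?_, fun hy => ⟨hA hy, ?_⟩⟩⟩
  · rintro ⟨⟨i, hi, rfl⟩, hBy⟩
    exact ((hB i hi).1 hBy).2
  · obtain ⟨i, hi, rfl⟩ := hA hy
    exact (hB i hi).2 ⟨hi, hy⟩

end Shattering

section Orders

variable {α β : Type*}

def bipartiteRel (L H : Set α) (u v : α) : Prop := u ∈ L ∧ v ∈ H

theorem bipartiteRel_preimage_mem_partialOrds {n : ℕ} {L H : Set ℕ} (h : Disjoint L H) :
    bipartiteRel (Fin.val ⁻¹' L) (Fin.val ⁻¹' H) ∈ PartialOrds n :=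
  ⟨fun _ hu => h.ne_of_mem hu.1 hu.2 rfl, fun _ _ _ huv hvw => (h.ne_of_mem hvw.1 huv.2 rfl).elim⟩

theorem lt_comp_mem_totalOrds [LinearOrder β] {n : ℕ} {ρ : Fin n → β} (hρ : ρ.Injective) :
    (fun u v => ρ u < ρ v) ∈ TotalOrds n :=
  ⟨fun u => lt_irrefl (ρ u), fun _ _ _ => lt_trans, fun _ _ huv => lt_or_gt_of_ne (hρ.ne huv)⟩

theorem ordCompat_lt_comp_iff [LinearOrder β] {ρ : α → β} (hρ : ρ.Injective) {Q : α → α → Prop} :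
    OrdCompat (fun u v => ρ u < ρ v) Q ↔ ∀ u v, Q u v → ρ u < ρ v := by
  constructor
  · intro hc u v hQ
    by_contra hbound
    rcases (not_lt.1 hbound).eq_or_lt with heq | hvu
    · exact hc u (.single (Or.inr (hρ heq ▸ hQ)))
    · exact hc u (.tail (.single (Or.inr hQ)) (Or.inl hvu))
  · intro hQ u hu
    have hρu := Relation.TransGen.lift ρ (p := (· < ·)) (fun a b hab => hab.elim id (hQ a b)) u u hu
    rw [Relation.transGen_eq_self] at hρu
    exact lt_irrefl _ hρu

theorem ordCompat_bipartiteRel_preimage_iff [LinearOrder β] {n : ℕ} {σ : ℕ → β}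
    (hσ : σ.Injective) {L H : Set ℕ} (hL : ∀ u ∈ L, u < n) (hH : ∀ v ∈ H, v < n) :
    OrdCompat (fun u v : Fin n => σ u < σ v) (bipartiteRel (Fin.val ⁻¹' L) (Fin.val ⁻¹' H)) ↔
      ∀ u ∈ L, ∀ v ∈ H, σ u < σ v := by
  refine (ordCompat_lt_comp_iff (ρ := σ ∘ Fin.val) (hσ.comp Fin.val_injective)).trans
    ⟨fun h u hu v hv => h ⟨u, hL u hu⟩ ⟨v, hH v hv⟩ ⟨hu, hv⟩,
    fun h u v huv => h u huv.1 v huv.2⟩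

end Orders

section Gadget

def gadgetLower (i : ℕ) : Fin 3 → Set ℕ := ![{2 * i}, {0}, {2 * i, 2 * i + 1}]

def gadgetUpper (i : ℕ) : Fin 3 → Set ℕ := ![{2 * i + 1}, {2 * i, 2 * i + 1}, {1}]

def gadgetOrder (n i : ℕ) (j : Fin 3) : Fin n → Fin n → Prop :=
  bipartiteRel (Fin.val ⁻¹' gadgetLower i j) (Fin.val ⁻¹' gadgetUpper i j)

theorem gadgetOrder_mem_partialOrds (n : ℕ) {i : ℕ} (hi : 1 ≤ i) (j : Fin 3) :
    gadgetOrder n i j ∈ PartialOrds n := by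
  refine bipartiteRel_preimage_mem_partialOrds ?_
  fin_cases j <;> simp [gadgetLower, gadgetUpper] <;> omega

/-- Region (among `0, …, 7`) of the element `2i` (`first`) or `2i + 1` of a pair carrying the
bits `b`; the anchors `0` and `1` sit in regions `2` and `5`. -/
def slot (b : Fin 3 → Bool) (first : Bool) : ℕ :=
  let (lo, hi) : ℕ × ℕ := match b 1, b 2 with
    | true, true => (3, 4)
    | true, false => (6, 7)
    | false, true => (0, 1)
    | false, false => (0, 7)
  if first = b 0 then lo else hi

theorem slot_spec (b : Fin 3 → Bool) :
    (slot b true ≤ slot b false ↔ b 0) ∧ (2 ≤ slot b true ∧ 2 ≤ slot b false ↔ b 1) ∧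
      (slot b true < 5 ∧ slot b false < 5 ↔ b 2) := by
  revert b; decide

def region (c : ℕ → Fin 3 → Bool) (u : ℕ) : ℕ :=
  if u = 0 then 2 else if u = 1 then 5 else slot (c (u / 2)) (u % 2 = 0)

def rank (c : ℕ → Fin 3 → Bool) (u : ℕ) : ℕ ×ₗ ℕ := toLex (region c u, u)

theorem rank_injective (c : ℕ → Fin 3 → Bool) : (rank c).Injective :=
  fun _ _ h => congrArg (fun x => (ofLex x).2) h

def realizer (n : ℕ) (c : ℕ → Fin 3 → Bool) : Fin n → Fin n → Prop :=
  fun u v => rank c u < rank c v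

theorem realizer_mem_totalOrds (n : ℕ) (c : ℕ → Fin 3 → Bool) : realizer n c ∈ TotalOrds n :=
  lt_comp_mem_totalOrds ((rank_injective c).comp Fin.val_injective)

theorem ordCompat_realizer_gadgetOrder_iff {n i : ℕ} (c : ℕ → Fin 3 → Bool) (hi : 1 ≤ i)
    (hin : 2 * i + 1 < n) (j : Fin 3) :
    OrdCompat (realizer n c) (gadgetOrder n i j) ↔ c i j = true := by
  have hbound : ∀ k : Fin 3, (∀ u ∈ gadgetLower i k, u < n) ∧ ∀ u ∈ gadgetUpper i k, u < n := by
    intro k; fin_cases k <;> simp [gadgetLower, gadgetUpper] <;> omega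
  unfold realizer gadgetOrder
  rw [ordCompat_bipartiteRel_preimage_iff (rank_injective c) (hbound j).1 (hbound j).2]
  have hfirst : region c (2 * i) = slot (c i) true := by
    rw [region, if_neg (by omega), if_neg (by omega), Nat.mul_div_cancel_left i two_pos]
    simp
  have hsecond : region c (2 * i + 1) = slot (c i) false := by
    rw [region, if_neg (by omega), if_neg (by omega), Nat.mul_add_div two_pos]
    simp
  have hanchors : region c 0 = 2 ∧ region c 1 = 5 := by simp [region]
  -- Ties in `region` are broken by the index, and `0 < 1 < 2i < 2i + 1`: this is why `slot_spec`
  -- compares with `≤` against later elements and with `<` against the anchor `1`.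
  obtain ⟨h0, h1, h2⟩ := slot_spec (c i)
  fin_cases j <;> simp [gadgetLower, gadgetUpper, rank, Prod.Lex.toLex_lt_toLex, hfirst, hsecond,
    hanchors, ← h0, ← h1, ← h2] <;> omega

end Gadget

theorem stmt6_general {n : ℕ} :
    ∃ S ⊆ PartialOrds n, S.Finite ∧ 3 * (n / 2 - 1) ≤ S.ncard ∧
      ShattersVia (TotalOrds n) OrdCompat S := by
  classical
  set s : Set (ℕ × Fin 3) := Set.Ico 1 (n / 2) ×ˢ Set.univ
  have hrealize : ∀ A ⊆ s, ∃ T ∈ TotalOrds n, ∀ x ∈ s,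
      OrdCompat T (gadgetOrder n x.1 x.2) ↔ x ∈ A := by
    intro A _
    let c : ℕ → Fin 3 → Bool := fun i j => decide ((i, j) ∈ A)
    refine ⟨realizer n c, realizer_mem_totalOrds n c, ?_⟩
    rintro ⟨i, j⟩ ⟨⟨hi, hin⟩, -⟩
    simpa [c] using ordCompat_realizer_gadgetOrder_iff c hi (by omega) j
  refine ⟨(fun x => gadgetOrder n x.1 x.2) '' s, ?_, s.toFinite.image _, ?_,
    shattersVia_image_of_forall_realize hrealize⟩
  · rintro _ ⟨⟨i, j⟩, ⟨hi, -⟩, rfl⟩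
    exact gadgetOrder_mem_partialOrds n hi.1 j
  · rw [Set.ncard_image_of_injOn (injOn_of_forall_realize hrealize), Set.ncard_prod]
    simp [mul_comm]

theorem stmt6 {n : ℕ} (hn : 2 ≤ n) :
    ∃ S ⊆ PartialOrds n, S.Finite ∧ 3 * (n / 2 - 1) ≤ S.ncard ∧
      ShattersVia (TotalOrds n) OrdCompat S :=
  stmt6_general
end

section
/- For n ≥ 4, the VC-dimension of the family of partial orders on [n] over the total orders on [n] (via compatibility) is at most ⌊n²/4⌋. -/
/-!
If `S` is shattered, a partial order cutting out `S \ {T}` is incompatible with `T` alone, which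
gives every `T ∈ S` a private pair: some `(a, b)` that `T` orders as `b < a` and every other
member of `S` as `a < b`. Once `|S| ≥ 4`, distinct orders have distinct private pairs even as
unordered pairs, and these pairs form a triangle-free graph on `[n]`: a fourth order of `S`
orders the three vertices of a triangle as a chain `a < b < c`, and the owner of `{a, c}` keeps
`a < b < c` but reverses `a < c`. Mantel's theorem then bounds `|S|` by `⌊n²/4⌋`, and for
`n ≥ 4` this bound also covers `|S| ≤ 3`.
-/

open Finset

theorem SimpleGraph.CliqueFree.card_edgeFinset_le_sq_div_four {V : Type*} [Fintype V]
    {G : SimpleGraph V} [DecidableRel G.Adj] (h : G.CliqueFree 3) :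
    #G.edgeFinset ≤ Fintype.card V ^ 2 / 4 := by
  have hle := h.card_edgeFinset_le (r := 2)
  dsimp only at hle
  rw [Nat.choose_eq_zero_of_lt (Nat.mod_lt _ two_pos), add_zero] at hle
  exact hle.trans (Nat.div_le_div (by simp) (by norm_num) (by norm_num))

theorem Set.exists_mem_notMem_of_card_lt_ncard {β : Type*} {s : Set β} {t : Finset β}
    (h : #t < s.ncard) : ∃ x ∈ s, x ∉ t :=
  Set.exists_mem_notMem_of_ncard_lt_ncard (by rwa [Set.ncard_coe_finset])

theorem IsStrictTotalOrder.chain_of_ne {α : Type*} (r : α → α → Prop) [IsStrictTotalOrder α r]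
    {x y z : α} (hxy : x ≠ y) (hyz : y ≠ z) (hxz : x ≠ z) :
    (r x y ∧ r y z) ∨ (r x z ∧ r z y) ∨ (r y x ∧ r x z) ∨
      (r y z ∧ r z x) ∨ (r z x ∧ r x y) ∨ (r z y ∧ r y x) := by
  have total {a b : α} (hab : a ≠ b) : r a b ∨ r b a :=
    (trichotomous_of r a b).imp_right (Or.resolve_left · hab)
  have acyclic {a b c : α} (hab : r a b) (hbc : r b c) (hca : r c a) : False :=
    irrefl a (_root_.trans (_root_.trans hab hbc) hca)
  rcases total hxy with h₁ | h₁ <;> rcases total hyz with h₂ | h₂ <;>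
    rcases total hxz with h₃ | h₃
  all_goals tauto

theorem OrdCompat.of_forall_imp {α : Type*} {r s : α → α → Prop} [IsStrictOrder α s]
    (h : ∀ a b, r a b → s a b) : OrdCompat r s := fun a ha =>
  irrefl a <| Relation.transGen_eq_self (r := s) ▸
    Relation.TransGen.mono (fun x y (hxy : r x y ∨ s x y) => hxy.elim (h x y) id) a a ha

theorem OrdCompat.not_rel_swap {α : Type*} {r s : α → α → Prop} (h : OrdCompat r s) {a b : α}
    (hr : r a b) : ¬ s b a := fun hs =>
  h a (.head (Or.inl hr) (.single (Or.inr hs)))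

theorem isStrictTotalOrder_of_mem_totalOrds {n : ℕ} {T : Fin n → Fin n → Prop}
    (hT : T ∈ TotalOrds n) : IsStrictTotalOrder (Fin n) T where
  irrefl := hT.1
  trans _ _ _ := @hT.2.1 _ _ _
  trichotomous a b hab hba := by
    by_contra hne
    exact (hT.2.2 a b hne).elim hab hba

def IsPrivatePair {α : Type*} (S : Set (α → α → Prop)) (T : α → α → Prop) (a b : α) : Prop :=
  T b a ∧ ∀ U ∈ S, U ≠ T → U a b

theorem exists_isPrivatePair_of_shattersVia {n : ℕ} {S : Set (Fin n → Fin n → Prop)}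
    (hS : S ⊆ TotalOrds n) (hsh : ShattersVia (PartialOrds n) OrdCompat S)
    {T : Fin n → Fin n → Prop} (hT : T ∈ S) : ∃ a b, IsPrivatePair S T a b := by
  obtain ⟨P, hP, hPS⟩ := hsh (S \ {T}) Set.sdiff_subset
  have compat_iff {U} (hU : U ∈ S) : OrdCompat P U ↔ U ≠ T := by
    simpa [hU] using Set.ext_iff.1 hPS U
  have : IsStrictTotalOrder (Fin n) T := isStrictTotalOrder_of_mem_totalOrds (hS hT)
  obtain ⟨a, b, hab, hTab⟩ : ∃ a b, P a b ∧ ¬ T a b := by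
    by_contra! h
    exact (compat_iff hT).1 (.of_forall_imp h) rfl
  have hne : a ≠ b := fun h => hP.1 a (h ▸ hab)
  refine ⟨a, b, (hS hT).2.2 a b hne |>.resolve_left hTab, fun U hU hUT => ?_⟩
  exact (hS hU).2.2 a b hne |>.resolve_right (((compat_iff hU).2 hUT).not_rel_swap hab)

section PrivatePairs

variable {α : Type*} {S : Set (α → α → Prop)} {p : (α → α → Prop) → α × α}

theorem rel_of_rel_of_mk_eq (hS : ∀ T ∈ S, IsStrictTotalOrder α T)
    (hp : ∀ T ∈ S, IsPrivatePair S T (p T).1 (p T).2) {T U V : α → α → Prop} {a b : α}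
    (hT : T ∈ S) (hU : U ∈ S) (hV : V ∈ S) (hTV : T ≠ V) (hUV : U ≠ V)
    (he : s((p V).1, (p V).2) = s(a, b)) (h : T a b) : U a b := by
  have := hS T hT
  rcases Sym2.eq_iff.1 he with ⟨ha, hb⟩ | ⟨hb, ha⟩
  · exact ha ▸ hb ▸ (hp V hV).2 U hU hUV
  · exact absurd (hb ▸ ha ▸ (hp V hV).2 T hT hTV) (asymm h)

theorem rel_swap_of_mk_eq (hS : ∀ T ∈ S, IsStrictTotalOrder α T)
    (hp : ∀ T ∈ S, IsPrivatePair S T (p T).1 (p T).2) {U V : α → α → Prop} {a b : α}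
    (hU : U ∈ S) (hV : V ∈ S) (hUV : U ≠ V)
    (he : s((p V).1, (p V).2) = s(a, b)) (h : U a b) : V b a := by
  have := hS U hU
  rcases Sym2.eq_iff.1 he with ⟨ha, hb⟩ | ⟨hb, ha⟩
  · exact ha ▸ hb ▸ (hp V hV).1
  · exact absurd (hb ▸ ha ▸ (hp V hV).2 U hU hUV) (asymm h)

theorem injOn_mk_of_isPrivatePair (hS : ∀ T ∈ S, IsStrictTotalOrder α T)
    (hp : ∀ T ∈ S, IsPrivatePair S T (p T).1 (p T).2) (hS2 : 2 < S.ncard) :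
    S.InjOn fun T => s((p T).1, (p T).2) := by
  classical
  intro T₁ hT₁ T₂ hT₂ he
  by_contra hne
  obtain ⟨W, hW, hW₁₂⟩ := Set.exists_mem_notMem_of_card_lt_ncard (t := {T₁, T₂})
    (card_le_two.trans_lt hS2)
  simp only [mem_insert, mem_singleton, not_or] at hW₁₂
  have := hS W hW
  exact asymm ((hp T₂ hT₂).2 W hW hW₁₂.2) <| rel_of_rel_of_mk_eq hS hp hT₂ hW hT₁ (Ne.symm hne)
    hW₁₂.1 (he.trans Sym2.eq_swap) (hp T₂ hT₂).1

theorem false_of_chain (hS : ∀ T ∈ S, IsStrictTotalOrder α T)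
    (hp : ∀ T ∈ S, IsPrivatePair S T (p T).1 (p T).2) {U : α → α → Prop} {a b c : α}
    (hU : U ∈ S)
    (h₁ : ∃ T ∈ S, T ≠ U ∧ s((p T).1, (p T).2) = s(a, b))
    (h₂ : ∃ T ∈ S, T ≠ U ∧ s((p T).1, (p T).2) = s(b, c))
    (h₃ : ∃ T ∈ S, T ≠ U ∧ s((p T).1, (p T).2) = s(a, c))
    (hab : U a b) (hbc : U b c) : False := by
  obtain ⟨T₁, hT₁, hUT₁, he₁⟩ := h₁
  obtain ⟨T₂, hT₂, hUT₂, he₂⟩ := h₂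
  obtain ⟨T₃, hT₃, hUT₃, he₃⟩ := h₃
  have := hS U hU
  have h₁₃ : T₃ ≠ T₁ := by
    rintro rfl
    exact ne_of_irrefl hbc (Sym2.congr_right.1 (he₁.symm.trans he₃))
  have h₂₃ : T₃ ≠ T₂ := by
    rintro rfl
    exact ne_of_irrefl hab (Sym2.congr_left.1 (he₃.symm.trans he₂))
  have hab₃ : T₃ a b := rel_of_rel_of_mk_eq hS hp hU hT₃ hT₁ hUT₁.symm h₁₃ he₁ hab
  have hbc₃ : T₃ b c := rel_of_rel_of_mk_eq hS hp hU hT₃ hT₂ hUT₂.symm h₂₃ he₂ hbc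
  have hca₃ : T₃ c a := rel_swap_of_mk_eq hS hp hU hT₃ hUT₃.symm he₃ (_root_.trans hab hbc)
  have := hS T₃ hT₃
  exact irrefl a (_root_.trans (_root_.trans hab₃ hbc₃) hca₃)

def privatePairGraph (S : Set (α → α → Prop)) (p : (α → α → Prop) → α × α) : SimpleGraph α :=
  SimpleGraph.fromEdgeSet ((fun T => s((p T).1, (p T).2)) '' S)

theorem cliqueFree_three_privatePairGraph (hS : ∀ T ∈ S, IsStrictTotalOrder α T)
    (hp : ∀ T ∈ S, IsPrivatePair S T (p T).1 (p T).2) (hS3 : 3 < S.ncard) :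
    (privatePairGraph S p).CliqueFree 3 := by
  classical
  intro t ht
  obtain ⟨x, y, z, hxy, hxz, hyz, -⟩ := SimpleGraph.is3Clique_iff.1 ht
  simp only [privatePairGraph, SimpleGraph.fromEdgeSet_adj, Set.mem_image] at hxy hxz hyz
  obtain ⟨⟨Txy, hTxy, exy⟩, hxy⟩ := hxy
  obtain ⟨⟨Txz, hTxz, exz⟩, hxz⟩ := hxz
  obtain ⟨⟨Tyz, hTyz, eyz⟩, hyz⟩ := hyz
  obtain ⟨U, hU, hUT⟩ := Set.exists_mem_notMem_of_card_lt_ncard (t := {Txy, Txz, Tyz})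
    (card_le_three.trans_lt hS3)
  simp only [mem_insert, mem_singleton, not_or] at hUT
  have own {v w : α} (hvw : s(v, w) ∈ ({s(x, y), s(x, z), s(y, z)} : Set (Sym2 α))) :
      ∃ T ∈ S, T ≠ U ∧ s((p T).1, (p T).2) = s(v, w) := by
    simp only [Set.mem_insert_iff, Set.mem_singleton_iff] at hvw
    rcases hvw with h | h | h
    exacts [⟨Txy, hTxy, Ne.symm hUT.1, exy.trans h.symm⟩,
      ⟨Txz, hTxz, Ne.symm hUT.2.1, exz.trans h.symm⟩,
      ⟨Tyz, hTyz, Ne.symm hUT.2.2, eyz.trans h.symm⟩]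
  have := hS U hU
  rcases IsStrictTotalOrder.chain_of_ne U hxy hyz hxz with
    ⟨h₁, h₂⟩ | ⟨h₁, h₂⟩ | ⟨h₁, h₂⟩ | ⟨h₁, h₂⟩ | ⟨h₁, h₂⟩ | ⟨h₁, h₂⟩ <;>
  exact false_of_chain hS hp hU (own (by simp)) (own (by simp)) (own (by simp)) h₁ h₂

theorem ncard_le_sq_div_four_of_isPrivatePair [Fintype α]
    (hS : ∀ T ∈ S, IsStrictTotalOrder α T) (hpriv : ∀ T ∈ S, ∃ a b, IsPrivatePair S T a b)
    (hS3 : 3 < S.ncard) : S.ncard ≤ Fintype.card α ^ 2 / 4 := by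
  classical
  obtain ⟨T₀, hT₀⟩ := Set.nonempty_of_ncard_ne_zero (s := S) (by omega)
  have : Nonempty α := ⟨(hpriv T₀ hT₀).choose⟩
  choose! a b hab using hpriv
  let p T := (a T, b T)
  have hp : ∀ T ∈ S, IsPrivatePair S T (p T).1 (p T).2 := hab
  have hedges : (fun T => s((p T).1, (p T).2)) '' S ⊆ (privatePairGraph S p).edgeSet := by
    rintro _ ⟨T, hT, rfl⟩
    have := hS T hT
    rw [privatePairGraph, SimpleGraph.edgeSet_fromEdgeSet]
    exact ⟨Set.mem_image_of_mem _ hT, Sym2.mk_isDiag_iff.not.2 (ne_of_irrefl' (hp T hT).1)⟩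
  calc S.ncard = ((fun T => s((p T).1, (p T).2)) '' S).ncard :=
        ((injOn_mk_of_isPrivatePair hS hp (by omega)).ncard_image).symm
    _ ≤ (privatePairGraph S p).edgeSet.ncard := Set.ncard_le_ncard hedges
    _ = #(privatePairGraph S p).edgeFinset := by
        rw [← SimpleGraph.coe_edgeFinset, Set.ncard_coe_finset]
    _ ≤ Fintype.card α ^ 2 / 4 :=
        (cliqueFree_three_privatePairGraph hS hp hS3).card_edgeFinset_le_sq_div_four

end PrivatePairs

theorem stmt8 {n : ℕ} (hn : 4 ≤ n) :
    ∀ S ⊆ TotalOrds n, ShattersVia (PartialOrds n) OrdCompat S →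
      S.Finite ∧ S.ncard ≤ n ^ 2 / 4 := by
  intro S hS hsh
  refine ⟨S.toFinite, ?_⟩
  rcases le_or_gt S.ncard 3 with hS3 | hS3
  · have : 16 ≤ n ^ 2 := by nlinarith
    omega
  · simpa using ncard_le_sq_div_four_of_isPrivatePair
      (fun T hT => isStrictTotalOrder_of_mem_totalOrds (hS hT))
      (fun T hT => exists_isPrivatePair_of_shattersVia hS hsh hT) hS3
end

section
/- For n ≥ 4, the VC-dimension of the family of partial orders on [n] over the total orders on [n] (via compatibility) is at least ⌊n²/4⌋. Specifically, letting k = ⌊n/2⌋ and for each pair (i,j) with 1 ≤ i ≤ k < j ≤ n letting A_{i,j} be a topological ordering of the acyclic digraph consisting of the edge j → i together with all edges i' → j' for pairs (i',j') ≠ (i,j) with 1 ≤ i' ≤ k < j' ≤ n, the set {A_{i,j}} of total orders is shattered by the partial orders via compatibility. -/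
open Relation

section Compat

variable {α : Type*} {r s t : α → α → Prop}

theorem ordCompat_of_le (ht : Irreflexive t) (ht' : Transitive t) (hr : r ≤ t) (hs : s ≤ t) :
    OrdCompat r s := by
  intro a hcycle
  exact ht a (@transGen_minimal _ _ _ ⟨ht'⟩ (fun a b h => h.elim (hr a b) (hs a b)) a a hcycle)

theorem not_ordCompat_of_swap {a b : α} (hr : r a b) (hs : s b a) : ¬OrdCompat r s :=
  fun h => h a (.head (Or.inl hr) (TransGen.single (Or.inr hs)))

end Compat

section Reversal

variable {α : Type*} {S : Set (α × α)} {A : α × α → α → α → Prop}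
  (hA : ∀ p ∈ S, Irreflexive (A p) ∧ Transitive (A p))
  (hrev : ∀ p ∈ S, A p p.2 p.1) (hfwd : ∀ p ∈ S, ∀ q ∈ S, q ≠ p → A p q.1 q.2)
include hA hrev hfwd

theorem injOn_of_reversal : S.InjOn A := by
  intro p hp q hq hpq
  by_contra hne
  have hfwd_q : A p q.1 q.2 := hfwd p hp q hq (Ne.symm hne)
  have hrev_q : A p q.2 q.1 := hpq ▸ hrev q hq
  exact (hA p hp).1 _ ((hA p hp).2 hfwd_q hrev_q)

theorem shattersVia_image_of_reversal (hS : ∀ p ∈ S, ∀ q ∈ S, p.2 ≠ q.1) :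
    ShattersVia {r : α → α → Prop | Irreflexive r ∧ Transitive r} OrdCompat (A '' S) := by
  intro 𝒜 h𝒜
  set B : α → α → Prop := fun a b => (a, b) ∈ S ∧ A (a, b) ∉ 𝒜
  have hB : Irreflexive B ∧ Transitive B :=
    ⟨fun a ha => hS _ ha.1 _ ha.1 rfl, fun _ _ _ hab hbc => (hS _ hab.1 _ hbc.1 rfl).elim⟩
  have hcompat : ∀ p ∈ S, OrdCompat B (A p) ↔ A p ∈ 𝒜 := by
    intro p hp
    refine ⟨fun h => ?_, fun h => ?_⟩
    · by_contra hp𝒜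
      exact not_ordCompat_of_swap (r := B) ⟨hp, hp𝒜⟩ (hrev p hp) h
    · refine ordCompat_of_le (hA p hp).1 (hA p hp).2 (fun a b hab => ?_) le_rfl
      exact hfwd p hp (a, b) hab.1 (by rintro rfl; exact hab.2 h)
  refine ⟨B, hB, Set.ext fun y => ⟨?_, fun hy => ⟨h𝒜 hy, ?_⟩⟩⟩
  · rintro ⟨⟨p, hp, rfl⟩, h⟩
    exact (hcompat p hp).1 h
  · obtain ⟨p, hp, rfl⟩ := h𝒜 hy
    exact (hcompat p hp).2 hy

end Reversal

def crossPairs (n k : ℕ) : Set (Fin n × Fin n) :=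
  {p | p.1.val < k ∧ k ≤ p.2.val}

theorem crossPairs_snd_ne_fst {n k : ℕ} :
    ∀ p ∈ crossPairs n k, ∀ q ∈ crossPairs n k, p.2 ≠ q.1 := by
  rintro p ⟨-, hp⟩ q ⟨hq, -⟩ h
  rw [h] at hp
  omega

theorem ncard_setOf_val_lt {n k : ℕ} (hk : k ≤ n) : {a : Fin n | a.val < k}.ncard = k := by
  rw [Set.ncard_eq_toFinset_card', Set.toFinset_ofPred, Fin.card_filter_val_lt, min_eq_right hk]

theorem ncard_setOf_le_val {n k : ℕ} (hk : k ≤ n) : {a : Fin n | k ≤ a.val}.ncard = n - k := by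
  have h := Set.ncard_add_ncard_compl {a : Fin n | a.val < k}
  simp only [ncard_setOf_val_lt hk, Set.compl_ofPred, not_lt, Nat.card_eq_fintype_card,
    Fintype.card_fin] at h
  omega

theorem ncard_crossPairs {n k : ℕ} (hk : k ≤ n) : (crossPairs n k).ncard = k * (n - k) := by
  change ({a : Fin n | a.val < k} ×ˢ {b : Fin n | k ≤ b.val}).ncard = _
  rw [Set.ncard_prod, ncard_setOf_val_lt hk, ncard_setOf_le_val hk]

theorem sq_div_four_eq (n : ℕ) : n ^ 2 / 4 = n / 2 * (n - n / 2) := by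
  rcases Nat.even_or_odd' n with ⟨m, rfl | rfl⟩
  · rw [show 2 * m / 2 = m by omega, show 2 * m - m = m by omega,
      show (2 * m) ^ 2 = 4 * (m * m) by ring]
    omega
  · rw [show (2 * m + 1) / 2 = m by omega, show 2 * m + 1 - m = m + 1 by omega,
      show (2 * m + 1) ^ 2 = 4 * (m * (m + 1)) + 1 by ring]
    omega

theorem stmt9_general {n : ℕ}
    (A : Fin n × Fin n → (Fin n → Fin n → Prop))
    (hA : ∀ p : Fin n × Fin n, p.1.val < n / 2 → n / 2 ≤ p.2.val →
      A p ∈ TotalOrds n ∧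
      (∀ a b : Fin n, ((a = p.2 ∧ b = p.1) ∨
        (a.val < n / 2 ∧ n / 2 ≤ b.val ∧ (a, b) ≠ p)) → A p a b)) :
    ShattersVia (PartialOrds n) OrdCompat
      (A '' {p | p.1.val < n / 2 ∧ n / 2 ≤ p.2.val}) ∧
    n ^ 2 / 4 ≤ (A '' {p | p.1.val < n / 2 ∧ n / 2 ≤ p.2.val}).ncard := by
  change ShattersVia _ _ (A '' crossPairs n (n / 2)) ∧ _ ≤ (A '' crossPairs n (n / 2)).ncard
  have hpo : ∀ p ∈ crossPairs n (n / 2), Irreflexive (A p) ∧ Transitive (A p) :=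
    fun p hp => ⟨(hA p hp.1 hp.2).1.1, (hA p hp.1 hp.2).1.2.1⟩
  have hrev : ∀ p ∈ crossPairs n (n / 2), A p p.2 p.1 :=
    fun p hp => (hA p hp.1 hp.2).2 _ _ (Or.inl ⟨rfl, rfl⟩)
  have hfwd : ∀ p ∈ crossPairs n (n / 2), ∀ q ∈ crossPairs n (n / 2), q ≠ p → A p q.1 q.2 :=
    fun p hp q hq hqp => (hA p hp.1 hp.2).2 _ _ (Or.inr ⟨hq.1, hq.2, hqp⟩)
  refine ⟨shattersVia_image_of_reversal hpo hrev hfwd crossPairs_snd_ne_fst, ?_⟩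
  rw [Set.ncard_image_of_injOn (injOn_of_reversal hpo hrev hfwd),
    ncard_crossPairs (Nat.div_le_self n 2), sq_div_four_eq]

theorem stmt9 {n : ℕ} (hn : 4 ≤ n)
    (A : Fin n × Fin n → (Fin n → Fin n → Prop))
    (hA : ∀ p : Fin n × Fin n, p.1.val < n / 2 → n / 2 ≤ p.2.val →
      A p ∈ TotalOrds n ∧
      (∀ a b : Fin n, ((a = p.2 ∧ b = p.1) ∨
        (a.val < n / 2 ∧ n / 2 ≤ b.val ∧ (a, b) ≠ p)) → A p a b)) :
    ShattersVia (PartialOrds n) OrdCompat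
      (A '' {p | p.1.val < n / 2 ∧ n / 2 ≤ p.2.val}) ∧
    n ^ 2 / 4 ≤ (A '' {p | p.1.val < n / 2 ∧ n / 2 ≤ p.2.val}).ncard :=
  stmt9_general A hA
end
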